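/- arXiv:2010.05100 — 2 statements merged into one kernel-verified Lean document; each statement's English description precedes it below -/
import Mathlib

section
/- The octonionic cotangent satisfies the duplication formula 128·cot(2z) = cot(z) + cot(z + π/2) for every z ∈ 𝕆 such that 2z + πm ≠ 0 for all m ∈ ℤ. -/
noncomputable section
open Real MeasureTheory

/-- The octonions `𝕆`, modeled as `ℝ⁸` with the Euclidean norm, endowed below with the
Cayley–Dickson (octonionic) multiplication. -/
abbrev O8 : Type := EuclideanSpace ℝ (Fin 8)

namespace Octo

/-- The standard basis units `e₀ = 1, e₁, …, e₇`. -/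
def ee : Fin 8 → O8 := fun i => EuclideanSpace.single i 1

/-- The octonionic multiplication table `(eᵢ · eⱼ)`, arising from the Cayley–Dickson doubling
of the quaternions (with `e₄ = e₁e₂`, `e₅ = e₁e₃`, `e₆ = e₂e₃`, `e₇ = (e₁e₂)e₃`). -/
def mulTable : Fin 8 → Fin 8 → O8 :=
  ![![ee 0, ee 1, ee 2, ee 3, ee 4, ee 5, ee 6, ee 7],
    ![ee 1, -ee 0, ee 4, ee 5, -ee 2, -ee 3, -ee 7, ee 6],
    ![ee 2, -ee 4, -ee 0, ee 6, ee 1, ee 7, -ee 3, -ee 5],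
    ![ee 3, -ee 5, -ee 6, -ee 0, -ee 7, ee 1, ee 2, ee 4],
    ![ee 4, ee 2, -ee 1, ee 7, -ee 0, -ee 6, ee 5, -ee 3],
    ![ee 5, ee 3, -ee 7, -ee 1, ee 6, -ee 0, -ee 4, ee 2],
    ![ee 6, ee 7, ee 3, -ee 2, -ee 5, ee 4, -ee 0, -ee 1],
    ![ee 7, -ee 6, ee 5, -ee 4, ee 3, -ee 2, ee 1, -ee 0]]

/-- Octonionic multiplication, extended bilinearly from the multiplication table. -/
instance : Mul O8 := ⟨fun x y => ∑ i : Fin 8, ∑ j : Fin 8, (x i * y j) • mulTable i j⟩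

instance : One O8 := ⟨ee 0⟩

/-- The real part `Re z = x₀` of an octonion. -/
def re (z : O8) : ℝ := z 0

/-- Octonionic conjugation `z̄ = x₀ - x₁e₁ - ⋯ - x₇e₇`. -/
def conj (z : O8) : O8 := (2 * z 0) • ee 0 - z

/-- The real number `r`, viewed as an octonion. -/
def ofReal (r : ℝ) : O8 := r • ee 0

/-- The octonionic Cauchy kernel `q₀(z) = z̄ / |z|⁸`. -/
def q0 (z : O8) : O8 := (‖z‖ ^ 8)⁻¹ • conj z

/-- `u / |u|⁸` (numerator not conjugated). -/
def pk (u : O8) : O8 := (‖u‖ ^ 8)⁻¹ • u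

/-- The octonionic Cauchy–Riemann operator `𝒟f = ∂f/∂x₀ + Σᵢ eᵢ ∂f/∂xᵢ`, applied from the left.
`f` is left 𝕆-regular on `U` if `Dl f z = 0` for all `z ∈ U`. -/
def Dl (f : O8 → O8) (z : O8) : O8 :=
  fderiv ℝ f z (ee 0) + ∑ i : Fin 7, ee i.succ * fderiv ℝ f z (ee i.succ)

/-- The octonionic Cauchy–Riemann operator applied from the right:
`f𝒟 = ∂f/∂x₀ + Σᵢ (∂f/∂xᵢ) eᵢ`. -/
def Dr (f : O8 → O8) (z : O8) : O8 :=
  fderiv ℝ f z (ee 0) + ∑ i : Fin 7, fderiv ℝ f z (ee i.succ) * ee i.succ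

/-- The singly-periodic octonionic monogenic cotangent
`cot z = Σ_{m ∈ ℤ} (z̄ + πm)/|z + πm|⁸`. -/
def octCot (z : O8) : O8 := ∑' m : ℤ, q0 (z + ofReal (π * m))

/-- The octonionic tangent `tan z = - cot (z + π/2)`. -/
def octTan (z : O8) : O8 := - octCot (z + ofReal (π / 2))

/-- The singly-periodic octonionic monogenic cosecant
`csc z = Σ_{n ∈ ℤ} (-1)ⁿ (z̄ + πn)/|z + πn|⁸`. -/
def octCsc (z : O8) : O8 := ∑' n : ℤ, ((-1 : ℝ) ^ n) • q0 (z + ofReal (π * n))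

end Octo

/-! The kernel `q₀(w) = w̄/|w|⁸` is homogeneous of degree `-7`, so `128 q₀(2w) = q₀(w)` and
`128 cot(2z) = Σₘ q₀(z + πm/2)`. Splitting this absolutely convergent series into even and odd `m`
gives `cot z` and `cot (z + π/2)`. -/

theorem HasSum.int_even_add_odd {M : Type*} [AddCommMonoid M] [TopologicalSpace M]
    [ContinuousAdd M] {f : ℤ → M} {a b : M} (he : HasSum (fun k ↦ f (2 * k)) a)
    (ho : HasSum (fun k ↦ f (2 * k + 1)) b) : HasSum f (a + b) := by
  have h2 := mul_right_injective₀ (two_ne_zero' ℤ)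
  refine (h2.hasSum_range_iff.2 he).add_isCompl ?_
    (((add_left_injective 1).comp h2).hasSum_range_iff.2 ho)
  simpa [Function.comp_def] using Int.isCompl_even_odd

section IntMultiples

variable {E : Type*} [NormedAddCommGroup E] [NormedSpace ℝ E]

lemma eventually_abs_mul_norm_le_norm_add_smul (z v : E) :
    ∀ᶠ m : ℤ in Filter.cofinite, |(m : ℝ)| * ‖v‖ / 2 ≤ ‖z + (m : ℝ) • v‖ := by
  rcases eq_or_ne v 0 with rfl | hv
  · simp
  have hv' : 0 < ‖v‖ := norm_pos_iff.2 hv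
  filter_upwards [(tendsto_norm_cocompact_atTop.comp Int.tendsto_coe_cofinite).eventually_ge_atTop
    (2 * ‖z‖ / ‖v‖)] with m hm
  rw [Function.comp_apply, Real.norm_eq_abs, div_le_iff₀ hv'] at hm
  have : |(m : ℝ)| * ‖v‖ ≤ ‖z + (m : ℝ) • v‖ + ‖z‖ := by
    calc |(m : ℝ)| * ‖v‖ = ‖(z + (m : ℝ) • v) - z‖ := by
          rw [add_sub_cancel_left, norm_smul, Real.norm_eq_abs]
      _ ≤ _ := norm_sub_le _ _
  linarith

lemma summable_inv_norm_add_smul_pow (z : E) {v : E} (hv : v ≠ 0) {p : ℕ} (hp : 1 < p) :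
    Summable fun m : ℤ ↦ (‖z + (m : ℝ) • v‖ ^ p)⁻¹ := by
  have hv' : 0 < ‖v‖ := norm_pos_iff.2 hv
  have hbase : Summable fun m : ℤ ↦ (|(m : ℝ)| ^ p)⁻¹ := by
    simpa [abs_inv, abs_pow, one_div] using (summable_one_div_int_pow.2 hp).abs
  refine Summable.of_norm_bounded_eventually (hbase.mul_left ((2 / ‖v‖) ^ p)) ?_
  filter_upwards [eventually_abs_mul_norm_le_norm_add_smul z v,
    Filter.eventually_cofinite_ne 0] with m hm hm0
  have hm0' : 0 < |(m : ℝ)| * ‖v‖ / 2 := by positivity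
  rw [norm_inv, norm_pow, norm_norm, ← inv_pow, ← inv_pow, ← mul_pow]
  gcongr
  calc _ ≤ (|(m : ℝ)| * ‖v‖ / 2)⁻¹ := inv_anti₀ hm0' hm
    _ = _ := by field_simp

end IntMultiples

namespace Octo

lemma conj_smul (c : ℝ) (w : O8) : conj (c • w) = c • conj w := by
  rw [conj, conj, smul_sub, smul_smul, PiLp.smul_apply, smul_eq_mul, mul_left_comm]

lemma abs_conj_apply (w : O8) (i : Fin 8) : |conj w i| = |w i| := by
  rcases eq_or_ne i 0 with rfl | hi
  · simp [conj, ee, two_mul]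
  · simp [conj, ee, hi]

lemma norm_conj (w : O8) : ‖conj w‖ = ‖w‖ := by
  simp only [EuclideanSpace.norm_eq, Real.norm_eq_abs, abs_conj_apply]

lemma q0_smul (c : ℝ) (w : O8) : q0 (c • w) = (c ^ 7)⁻¹ • q0 w := by
  rcases eq_or_ne c 0 with rfl | hc
  · simp [q0]
  rw [q0, q0, conj_smul, norm_smul, smul_smul, smul_smul, Real.norm_eq_abs, mul_pow,
    (by decide : Even 8).pow_abs]
  congr 1
  field_simp

lemma norm_q0 (w : O8) : ‖q0 w‖ = (‖w‖ ^ 7)⁻¹ := by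
  rw [q0, norm_smul, norm_conj, norm_inv, norm_pow, norm_norm]
  rcases eq_or_ne ‖w‖ 0 with h | h
  · simp [h]
  · field_simp

lemma ofReal_mul (c r : ℝ) : ofReal (c * r) = c • ofReal r := by
  rw [ofReal, ofReal, smul_smul]

lemma ofReal_add (a b : ℝ) : ofReal (a + b) = ofReal a + ofReal b := by
  rw [ofReal, ofReal, ofReal, add_smul]

lemma ofReal_ne_zero {r : ℝ} (hr : r ≠ 0) : ofReal r ≠ 0 := by
  simp [ofReal, ee, hr]

lemma summable_q0_add_ofReal_mul (z : O8) {c : ℝ} (hc : c ≠ 0) :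
    Summable fun m : ℤ ↦ q0 (z + ofReal (c * m)) := by
  refine Summable.of_norm ?_
  simp only [norm_q0, mul_comm c, ofReal_mul]
  exact summable_inv_norm_add_smul_pow z (ofReal_ne_zero hc) (by norm_num)

lemma hasSum_octCot (z : O8) : HasSum (fun m : ℤ ↦ q0 (z + ofReal (π * m))) (octCot z) :=
  (summable_q0_add_ofReal_mul z pi_ne_zero).hasSum

end Octo

open Octo in
theorem octCot_duplication_general (z : O8) :
    (128 : ℝ) • Octo.octCot ((2 : ℝ) • z) =
      Octo.octCot z + Octo.octCot (z + Octo.ofReal (π / 2)) := by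
  have hsplit : HasSum (fun m : ℤ ↦ q0 (z + ofReal (π / 2 * m)))
      (octCot z + octCot (z + ofReal (π / 2))) := by
    refine HasSum.int_even_add_odd ((hasSum_octCot z).congr_fun fun k ↦ ?_)
      ((hasSum_octCot _).congr_fun fun k ↦ ?_)
    · congr 3; push_cast; ring
    · rw [add_assoc, ← ofReal_add]; congr 3; push_cast; ring
  refine (((hasSum_octCot ((2 : ℝ) • z)).const_smul (128 : ℝ)).unique ?_)
  refine hsplit.congr_fun fun m ↦ ?_
  rw [show (2 : ℝ) • z + ofReal (π * m) = (2 : ℝ) • (z + ofReal (π / 2 * m)) by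
    rw [smul_add, ← ofReal_mul, ← mul_assoc, mul_div_cancel₀ π two_ne_zero], q0_smul, smul_smul]
  norm_num

/-- the octonionic cotangent duplication formula
`128 cot(2z) = cot z + cot (z + π/2)`. -/
theorem octCot_duplication (z : O8) (h : ∀ m : ℤ, (2 : ℝ) • z + Octo.ofReal (π * m) ≠ 0) :
    (128 : ℝ) • Octo.octCot ((2 : ℝ) • z) =
      Octo.octCot z + Octo.octCot (z + Octo.ofReal (π / 2)) :=
  octCot_duplication_general z
end
end

section
/- The function f: 𝕆 → 𝕆, f(z) = x1 − x2·e4, satisfies 𝒟f = 0 (f is left 𝕆-regular on all of 𝕆), while the function g(z) := f(z)·e3 = x1·e3 − x2·e7 satisfies 𝒟g = 2e5 ≠ 0; consequently, left 𝕆-regular functions do not form a right 𝕆-module. -/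
noncomputable section
open Real MeasureTheory

/-! For a real-linear map `L`, `𝒟L` is the constant `L 1 + Σᵢ eᵢ · L eᵢ`. Hence
`𝒟f = e₁ - e₂e₄ = 0`, whereas `𝒟(f·e₃) = e₁e₃ - e₂(e₄e₃) = e₅ - e₂e₇ = 2e₅`: right multiplication
by `e₃` does not commute with `𝒟` because the octonions are not associative,
`(e₂e₄)e₃ = e₅` but `e₂(e₄e₃) = -e₅`. -/

namespace Octo

lemma mul_def (x y : O8) :
    x * y = ∑ i : Fin 8, ∑ j : Fin 8, (x i * y j) • mulTable i j := rfl

abbrev nonUnitalNonAssocRing : NonUnitalNonAssocRing O8 :=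
  { (inferInstance : AddCommGroup O8) with
    left_distrib := fun x y z => by
      simp only [mul_def, PiLp.add_apply, mul_add, add_smul, Finset.sum_add_distrib]
    right_distrib := fun x y z => by
      simp only [mul_def, PiLp.add_apply, add_mul, add_smul, Finset.sum_add_distrib]
    zero_mul := fun x => by simp [mul_def]
    mul_zero := fun x => by simp [mul_def] }

section

-- Local, so that outside this section `*`, `+`, `-` and `0` on `O8` elaborate through the
-- instances declared with the definitions.
attribute [local instance] nonUnitalNonAssocRing

local instance : IsScalarTower ℝ O8 O8 :=
  ⟨fun c x y => by simp [smul_eq_mul, mul_def, Finset.smul_sum, smul_smul, mul_assoc]⟩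

local instance : SMulCommClass ℝ O8 O8 :=
  ⟨fun c x y => by simp [smul_eq_mul, mul_def, Finset.smul_sum, smul_smul, mul_left_comm]⟩

lemma one_def : (1 : O8) = ee 0 := rfl

lemma ee_apply (a b : Fin 8) : ee a b = if b = a then 1 else 0 :=
  PiLp.single_apply 2 ℝ a 1 b

lemma ee_mul_ee (a b : Fin 8) : ee a * ee b = mulTable a b := by
  simp [mul_def, ee_apply, ite_smul]

lemma ee_ne_zero (a : Fin 8) : ee a ≠ 0 :=
  (PiLp.single_eq_zero_iff 2 a).not.mpr one_ne_zero

lemma Dl_clm (L : O8 →L[ℝ] O8) (z : O8) :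
    Dl L z = L (ee 0) + ∑ i : Fin 7, ee i.succ * L (ee i.succ) := by
  rw [Dl, L.fderiv]

lemma Dl_coord_smul_sub_coord_smul (a b z : O8) :
    Dl (fun w => w 1 • a - w 2 • b) z = ee 1 * a - ee 2 * b := by
  have hL : (fun w : O8 => w 1 • a - w 2 • b)
      = ⇑((EuclideanSpace.proj 1).smulRight a - (EuclideanSpace.proj 2).smulRight b :
          O8 →L[ℝ] O8) := by
    ext w; simp
  rw [hL, Dl_clm]
  simp [Fin.sum_univ_succ, ee_apply, ← sub_eq_add_neg]

lemma Dl_coord_one_sub_coord_two_smul_ee4 (z : O8) :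
    Dl (fun w => w 1 • (1 : O8) - w 2 • ee 4) z = 0 := by
  rw [Dl_coord_smul_sub_coord_smul, one_def, ee_mul_ee, ee_mul_ee]
  simp [mulTable]

lemma coord_one_sub_coord_two_smul_ee4_mul_ee3 (w : O8) :
    (w 1 • (1 : O8) - w 2 • ee 4) * ee 3 = w 1 • ee 3 - w 2 • ee 7 := by
  simp [one_def, sub_mul, smul_mul_assoc, ee_mul_ee, mulTable]

lemma Dl_coord_one_sub_coord_two_smul_ee4_mul_ee3 (z : O8) :
    Dl (fun w => (w 1 • (1 : O8) - w 2 • ee 4) * ee 3) z = (2 : ℝ) • ee 5 := by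
  simp only [coord_one_sub_coord_two_smul_ee4_mul_ee3, Dl_coord_smul_sub_coord_smul, ee_mul_ee]
  simp [mulTable, two_smul]

end

end Octo

/-- `f(z) = x₁ - x₂e₄` is left 𝕆-regular on all of `𝕆`, while
`g(z) = f(z)·e₃ = x₁e₃ - x₂e₇` satisfies `𝒟g = 2e₅ ≠ 0`; consequently left 𝕆-regular
functions do not form a right 𝕆-module. -/
theorem leftRegular_not_rightModule :
    (∀ z : O8, Octo.Dl (fun w => w 1 • (1 : O8) - w 2 • Octo.ee 4) z = 0) ∧
    (∀ w : O8, (w 1 • (1 : O8) - w 2 • Octo.ee 4) * Octo.ee 3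
        = w 1 • Octo.ee 3 - w 2 • Octo.ee 7) ∧
    (∀ z : O8, Octo.Dl (fun w => (w 1 • (1 : O8) - w 2 • Octo.ee 4) * Octo.ee 3) z
        = (2 : ℝ) • Octo.ee 5) ∧
    (2 : ℝ) • Octo.ee 5 ≠ 0 ∧
    ¬ ∀ (f : O8 → O8) (lam : O8),
        (∀ z : O8, Octo.Dl f z = 0) → ∀ z : O8, Octo.Dl (fun w => f w * lam) z = 0 := by
  open Octo in
  have two_ee5_ne_zero : (2 : ℝ) • ee 5 ≠ 0 := smul_ne_zero two_ne_zero (ee_ne_zero 5)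
  refine ⟨Dl_coord_one_sub_coord_two_smul_ee4, coord_one_sub_coord_two_smul_ee4_mul_ee3,
    Dl_coord_one_sub_coord_two_smul_ee4_mul_ee3, two_ee5_ne_zero, fun hmodule => ?_⟩
  apply two_ee5_ne_zero
  rw [← Dl_coord_one_sub_coord_two_smul_ee4_mul_ee3 0]
  exact hmodule _ (ee 3) Dl_coord_one_sub_coord_two_smul_ee4 0
end
end
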